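/- For a matrix A ∈ 𝕋±^{d×n} and a point b ∈ 𝕋±^d, we have b ∈ tconv(A) if and only if the non-negative kernel of the (d+1)×(n+1) block matrix with blocks A and ⊖b in the first d rows and the row (0, …, 0, ⊖0) in the last row is nonempty. -/

import Mathlib

/-!  Signed tropical numbers 𝕋±, the symmetrized tropical semiring 𝕊,
     and signed tropical convexity (Loho–Végh). -/

inductive SSign : Type where
  | pos : SSign
  | neg : SSign
  | bal : SSign
deriving DecidableEq

/-- The symmetrized tropical semiring 𝕊: the tropical zero 𝟘 = -∞ together with
elements `elem s r` where `s` is a sign (⊕, ⊖ or •) and `r` a real number. -/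
inductive STrop : Type where
  | zero : STrop
  | elem : SSign → ℝ → STrop

namespace STrop

/-- membership in the signed tropical numbers 𝕋± (i.e. not balanced-nonzero). -/
def isSigned : STrop → Prop
  | elem SSign.bal _ => False
  | _ => True

/-- membership in 𝕋≥, the nonnegative tropical numbers. -/
def nneg : STrop → Prop
  | zero => True
  | elem SSign.pos _ => True
  | _ => False

/-- membership in 𝕋≤, the nonpositive tropical numbers. -/
def npos : STrop → Prop
  | zero => True
  | elem SSign.neg _ => True
  | _ => False

/-- strictly positive signed element (sign ⊕, not 𝟘). -/
def isPos : STrop → Prop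
  | elem SSign.pos _ => True
  | _ => False

/-- balanced or 𝟘 (membership in 𝕋•). -/
def balZero : STrop → Prop
  | zero => True
  | elem SSign.bal _ => True
  | _ => False

/-- the negation map ⊖. -/
def neg : STrop → STrop
  | zero => zero
  | elem SSign.pos r => elem SSign.neg r
  | elem SSign.neg r => elem SSign.pos r
  | elem SSign.bal r => elem SSign.bal r

/-- tropical addition ⊕ on 𝕊. -/
noncomputable def add : STrop → STrop → STrop
  | zero, y => y
  | x, zero => x
  | elem s r, elem t u =>
    if r < u then elem t u
    else if u < r then elem s r
    else if s = t then elem s r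
    else elem SSign.bal r

def signMul : SSign → SSign → SSign
  | SSign.pos, t => t
  | SSign.neg, SSign.pos => SSign.neg
  | SSign.neg, SSign.neg => SSign.pos
  | SSign.neg, SSign.bal => SSign.bal
  | SSign.bal, _ => SSign.bal

/-- tropical multiplication ⊙ on 𝕊. -/
def mul : STrop → STrop → STrop
  | zero, _ => zero
  | _, zero => zero
  | elem s r, elem t u => elem (signMul s t) (r + u)

/-- a ⊖ b := a ⊕ (⊖b). -/
noncomputable def sub (x y : STrop) : STrop := add x (neg y)

/-- the tropical one, the signed element ⊕0. -/
def one : STrop := elem SSign.pos 0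

/-- the absolute value |·| : 𝕊 → 𝕋≥. -/
def absS : STrop → STrop
  | zero => zero
  | elem _ r => elem SSign.pos r

/-- strict order: x > y iff x ⊖ y is a strictly positive signed element. -/
def sgt (x y : STrop) : Prop := isPos (sub x y)

/-- balance relation: x ⋈ y iff x ⊖ y is balanced or 𝟘. -/
def bal (x y : STrop) : Prop := balZero (sub x y)

/-- the relation ⊵ : x ⊵ y iff x > y or x ⋈ y. -/
def teq (x y : STrop) : Prop := sgt x y ∨ bal x y

/-- the total order ≤ on the signed tropical numbers 𝕋±
(arbitrarily `False` whenever a balanced element is involved). -/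
def sle : STrop → STrop → Prop
  | zero, zero => True
  | zero, elem SSign.pos _ => True
  | elem SSign.neg _, zero => True
  | elem SSign.neg _, elem SSign.pos _ => True
  | elem SSign.pos r, elem SSign.pos u => r ≤ u
  | elem SSign.neg r, elem SSign.neg u => u ≤ r
  | _, _ => False

/-- U(a): the set of signed numbers incomparable with a; the singleton {a}
for signed a, and the order interval [⊖|a|, |a|] for balanced a. -/
def U : STrop → Set STrop
  | elem SSign.bal r => {x | isSigned x ∧ sle (elem SSign.neg r) x ∧ sle x (elem SSign.pos r)}
  | a => {a}

/-- tropical sum of finitely many elements of 𝕊. -/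
noncomputable def sumFin : ∀ {n : ℕ}, (Fin n → STrop) → STrop
  | 0, _ => zero
  | _ + 1, f => add (f 0) (sumFin fun i => f i.succ)

/-- matrix–vector product A ⊙ x over 𝕊. -/
noncomputable def mv {d n : ℕ} (A : Fin d → Fin n → STrop) (x : Fin n → STrop) : Fin d → STrop :=
  fun i => sumFin fun j => mul (A i j) (x j)

/-- vectors in 𝕋±^d. -/
def isSignedVec {d : ℕ} (v : Fin d → STrop) : Prop := ∀ i, isSigned (v i)

/-- the signed tropical convex hull of the columns of a matrix A:
tconv(A) = {z ∈ 𝕋±^d : z ⋈ A⊙x for some x ∈ 𝕋≥^n with ⊕_j x_j = 0}. -/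
def tconv {d n : ℕ} (A : Fin d → Fin n → STrop) : Set (Fin d → STrop) :=
  {z | isSignedVec z ∧ ∃ x : Fin n → STrop,
    (∀ j, nneg (x j)) ∧ sumFin x = one ∧ ∀ i, bal (z i) (mv A x i)}

/-- the signed tropical convex hull of an arbitrary set: the union of the hulls
of all finite collections of points of M. -/
def tconvSet {d : ℕ} (M : Set (Fin d → STrop)) : Set (Fin d → STrop) :=
  ⋃ (n : ℕ) (A : Fin d → Fin n → STrop) (_ : ∀ j, (fun i => A i j) ∈ M), tconv A

/-- a set M ⊆ 𝕋±^d is tropically convex iff M = tconv(M). -/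
def TropConvex {d : ℕ} (M : Set (Fin d → STrop)) : Prop := M = tconvSet M

/-- evaluation a ⊙ (0, x₁, …, x_d)ᵀ of an affine functional. -/
noncomputable def affEval {d : ℕ} (a : Fin (d + 1) → STrop) (x : Fin d → STrop) : STrop :=
  sumFin fun j => mul (a j) ((Fin.cons one x : Fin (d + 1) → STrop) j)

/-- the open signed tropical halfspace H⁺(a) = {x ∈ 𝕋±^d : a⊙(0,x)ᵀ > 𝟘}. -/
def Hopen {d : ℕ} (a : Fin (d + 1) → STrop) : Set (Fin d → STrop) :=
  {x | isSignedVec x ∧ sgt (affEval a x) zero}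

/-- the closed signed tropical halfspace H̄⁺(a) = {x ∈ 𝕋±^d : a⊙(0,x)ᵀ ⊵ 𝟘}. -/
def Hclosed {d : ℕ} (a : Fin (d + 1) → STrop) : Set (Fin d → STrop) :=
  {x | isSignedVec x ∧ teq (affEval a x) zero}

/-- the non-negative kernel nnker(A). -/
def nnker {d n : ℕ} (A : Fin d → Fin n → STrop) : Set (Fin n → STrop) :=
  {x | (∀ j, nneg (x j)) ∧ x ≠ (fun _ => zero) ∧ ∀ i, balZero (mv A x i)}

/-- the open tropical cone sep(A) = {y ∈ 𝕋±^d : yᵀ⊙A > 𝟘 componentwise}. -/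
def sep {d : ℕ} {J : Type} (A : Fin d → J → STrop) : Set (Fin d → STrop) :=
  {y | isSignedVec y ∧ ∀ j, isPos (sumFin fun i => mul (y i) (A i j))}

end STrop
set_option linter.unreachableTactic false
set_option linter.unnecessarySeqFocus false
set_option linter.unusedTactic false

namespace STrop

lemma zero_add' (x : STrop) : add zero x = x := by cases x <;> rfl

lemma add_zero' (x : STrop) : add x zero = x := by cases x <;> rfl

lemma add_comm' (x y : STrop) : add x y = add y x := by
  rcases x with _ | ⟨s, r⟩ <;> rcases y with _ | ⟨t, u⟩ <;> simp [add] <;>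
    split_ifs <;> simp_all <;> linarith

lemma add_assoc' (x y z : STrop) : add (add x y) z = add x (add y z) := by
  rcases x with _ | ⟨s, r⟩ <;> rcases y with _ | ⟨t, u⟩ <;> rcases z with _ | ⟨w, v⟩ <;>
    simp [add] <;> split_ifs <;> simp_all [add] <;> split_ifs <;> simp_all <;> intros <;> linarith

lemma neg_neg' (x : STrop) : neg (neg x) = x := by
  rcases x with _ | ⟨s, r⟩ <;> try cases s <;> rfl
  rfl

lemma mul_zero' (x : STrop) : mul x zero = zero := by cases x <;> rfl

lemma zero_mul' (x : STrop) : mul zero x = zero := by cases x <;> rfl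

lemma neg_add' (x y : STrop) : neg (add x y) = add (neg x) (neg y) := by
  rcases x with _ | ⟨s, r⟩ <;> rcases y with _ | ⟨t, u⟩
  · rfl
  · show neg (add zero _) = add zero _; simp only [zero_add']
  · show neg (add _ zero) = add _ zero; rw [add_zero', add_zero']
  · cases s <;> cases t <;> simp [add, neg] <;> split_ifs <;> simp_all [neg]

lemma balZero_neg (x : STrop) : balZero (neg x) ↔ balZero x := by
  rcases x with _ | ⟨s, r⟩ <;> try cases s <;> simp [neg, balZero]
  simp [neg, balZero]

lemma bal_symm {x y : STrop} (h : bal x y) : bal y x := by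
  unfold bal sub at *
  rw [← balZero_neg, neg_add', neg_neg'] at h
  rwa [add_comm']

lemma one_mul' (x : STrop) : mul one x = x := by
  rcases x with _ | ⟨s, r⟩ <;> simp [mul, one, signMul]

lemma mul_one' (x : STrop) : mul x one = x := by
  rcases x with _ | ⟨s, r⟩
  · rfl
  · cases s <;> simp [mul, one, signMul]

lemma neg_one_mul' (x : STrop) : mul (neg one) x = neg x := by
  rcases x with _ | ⟨s, r⟩ <;> try cases s <;> simp [mul, one, neg, signMul]
  rfl

lemma signMul_comm (s t : SSign) : signMul s t = signMul t s := by
  cases s <;> cases t <;> rfl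

lemma signMul_assoc (s t w : SSign) : signMul (signMul s t) w = signMul s (signMul t w) := by
  cases s <;> cases t <;> cases w <;> rfl

lemma mul_comm' (x y : STrop) : mul x y = mul y x := by
  rcases x with _ | ⟨s, r⟩ <;> rcases y with _ | ⟨t, u⟩ <;>
    simp [mul, signMul_comm, add_comm]

lemma mul_assoc' (x y z : STrop) : mul (mul x y) z = mul x (mul y z) := by
  rcases x with _ | ⟨s, r⟩ <;> rcases y with _ | ⟨t, u⟩ <;> rcases z with _ | ⟨w, v⟩ <;>
    simp [mul, signMul_assoc, add_assoc]

lemma add_mul' (x y z : STrop) : mul (add x y) z = add (mul x z) (mul y z) := by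
  rcases z with _ | ⟨w, v⟩
  · simp [mul_zero', add_zero']
  rcases x with _ | ⟨s, r⟩ <;> rcases y with _ | ⟨t, u⟩
  · rfl
  · rw [zero_add', zero_mul', zero_add']
  · show mul (add _ zero) _ = add _ (mul zero _)
    rw [add_zero', zero_mul', add_zero']
  · cases s <;> cases t <;> cases w <;>
      simp [mul, add, signMul] <;> split_ifs <;> simp_all [mul, signMul] <;> linarith

lemma neg_mul' (x y : STrop) : mul (neg x) y = neg (mul x y) := by
  rcases x with _ | ⟨s, r⟩ <;> rcases y with _ | ⟨t, u⟩
  · rfl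
  · rfl
  · cases s <;> rfl
  · cases s <;> cases t <;> rfl

lemma sumFin_snoc {n : ℕ} (f : Fin (n + 1) → STrop) :
    sumFin f = add (sumFin fun k => f (Fin.castSucc k)) (f (Fin.last n)) := by
  induction n with
  | zero =>
    show add (f 0) zero = add zero (f (Fin.last 0))
    rw [add_zero', zero_add']
    rfl
  | succ m ih =>
    show add (f 0) (sumFin fun i => f i.succ) = _
    rw [ih (fun i => f i.succ)]
    show _ = add (add (f (Fin.castSucc 0)) (sumFin fun i => f (Fin.castSucc i.succ)))
        (f (Fin.last (m+1)))
    rw [add_assoc']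
    rfl

lemma sumFin_mul {n : ℕ} (f : Fin n → STrop) (c : STrop) :
    sumFin (fun j => mul (f j) c) = mul (sumFin f) c := by
  induction n with
  | zero => cases c <;> rfl
  | succ m ih =>
    show add (mul (f 0) c) (sumFin fun i => mul (f i.succ) c) = mul (add (f 0) (sumFin fun i => f i.succ)) c
    rw [ih, add_mul']

lemma nneg_mul {x y : STrop} (hx : nneg x) (hy : nneg y) : nneg (mul x y) := by
  rcases x with _ | ⟨s, r⟩ <;> rcases y with _ | ⟨t, u⟩
  · trivial
  · trivial
  · trivial
  · cases s <;> cases t <;> simp_all [mul, nneg, signMul]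

lemma nneg_add {x y : STrop} (hx : nneg x) (hy : nneg y) : nneg (add x y) := by
  rcases x with _ | ⟨s, r⟩ <;> rcases y with _ | ⟨t, u⟩
  · trivial
  · rwa [zero_add']
  · rwa [add_zero']
  · cases s <;> cases t <;> simp_all [add, nneg] <;> split_ifs <;> simp [nneg]

lemma nneg_sumFin {n : ℕ} {f : Fin n → STrop} (h : ∀ j, nneg (f j)) : nneg (sumFin f) := by
  induction n with
  | zero => trivial
  | succ m ih => exact nneg_add (h 0) (ih fun j => h j.succ)

lemma add_eq_zero {x y : STrop} (h : add x y = zero) : x = zero ∧ y = zero := by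
  rcases x with _ | ⟨s, r⟩ <;> rcases y with _ | ⟨t, u⟩ <;> simp_all [add] <;>
    split_ifs at h <;> simp_all

lemma sumFin_eq_zero {n : ℕ} {f : Fin n → STrop} (h : sumFin f = zero) : ∀ j, f j = zero := by
  induction n with
  | zero => exact fun j => absurd j.2 (by omega)
  | succ m ih =>
    obtain ⟨h1, h2⟩ := add_eq_zero h
    intro j
    rcases Fin.eq_zero_or_eq_succ j with rfl | ⟨k, rfl⟩
    · exact h1
    · exact ih h2 k

lemma nneg_bal_eq {s t : STrop} (hs : nneg s) (ht : nneg t) (h : balZero (add s (neg t))) :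
    s = t := by
  rcases s with _ | ⟨s, r⟩ <;> rcases t with _ | ⟨t, u⟩
  · rfl
  · cases t <;> simp_all [add, neg, nneg, balZero]
  · cases s <;> simp_all [add, neg, nneg, balZero]
  · cases s <;> cases t <;> simp_all [add, neg, nneg, balZero] <;>
      split_ifs at h <;> simp_all [balZero] <;> linarith

lemma balZero_mul_pos {z : STrop} (γ : ℝ) :
    balZero (mul z (elem SSign.pos γ)) ↔ balZero z := by
  rcases z with _ | ⟨s, r⟩ <;> try cases s <;> simp [mul, balZero, signMul]
  simp [mul, balZero]

lemma nneg_ne_zero {c : STrop} (hc : nneg c) (h : c ≠ zero) : ∃ γ, c = elem SSign.pos γ := by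
  rcases c with _ | ⟨s, r⟩ <;> try cases s <;> simp_all [nneg]
  simp_all [nneg]

end STrop

open STrop
/-- b ∈ tconv(A) iff the non-negative kernel of the block matrix
with rows (A, ⊖b) and (0,…,0, ⊖0) is nonempty. -/
theorem mem_tconv_iff_nnker (d n : ℕ) (A : Fin d → Fin n → STrop)
    (hA : ∀ i j, STrop.isSigned (A i j)) (b : Fin d → STrop)
    (hb : STrop.isSignedVec b) :
    b ∈ STrop.tconv A ↔
      (STrop.nnker (Fin.lastCases
        (Fin.snoc (fun _ : Fin n => STrop.one) (STrop.neg STrop.one))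
        (fun i => Fin.snoc (A i) (STrop.neg (b i))))).Nonempty := by
  classical
  constructor
  · rintro ⟨hbS, x, hx1, hx2, hx3⟩
    refine ⟨Fin.snoc x STrop.one, ?_, ?_, ?_⟩
    · intro j
      refine Fin.lastCases ?_ ?_ j
      · rw [Fin.snoc_last]; trivial
      · intro k; rw [Fin.snoc_castSucc]; exact hx1 k
    · intro h
      have h2 := congrFun h (Fin.last n)
      rw [Fin.snoc_last] at h2
      exact STrop.noConfusion h2
    · intro i
      refine Fin.lastCases ?_ ?_ i
      · show balZero (sumFin fun j => mul _ _)
        rw [sumFin_snoc]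
        simp only [Fin.lastCases_last, Fin.snoc_castSucc, Fin.snoc_last, one_mul', mul_one']
        rw [show (sumFin fun k => x k) = sumFin x from rfl, hx2]
        simp [add, one, neg, balZero]
      · intro k
        show balZero (sumFin fun j => mul _ _)
        rw [sumFin_snoc]
        simp only [Fin.lastCases_castSucc, Fin.snoc_castSucc, Fin.snoc_last, mul_one']
        exact bal_symm (hx3 k)
  · rintro ⟨y, hy1, hy2, hy3⟩
    set e := STrop.elem SSign.pos
    have hlast := hy3 (Fin.last d)
    rw [show mv _ y (Fin.last d) = sumFin fun j =>
          mul ((Fin.snoc (fun _ : Fin n => one) (neg one) : Fin (n+1) → STrop) j) (y j) by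
        unfold mv; simp only [Fin.lastCases_last]] at hlast
    rw [sumFin_snoc] at hlast
    simp only [Fin.snoc_castSucc, Fin.snoc_last, one_mul', neg_one_mul'] at hlast
    have hs : nneg (sumFin fun k => y (Fin.castSucc k)) := nneg_sumFin fun k => hy1 _
    have hsc := nneg_bal_eq hs (hy1 (Fin.last n)) hlast
    have hcz : y (Fin.last n) ≠ zero := by
      intro h0
      apply hy2
      funext j
      refine Fin.lastCases h0 ?_ j
      intro k
      exact sumFin_eq_zero (hsc.trans h0) k
    obtain ⟨γ, hγ⟩ := nneg_ne_zero (hy1 (Fin.last n)) hcz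
    have hce : mul (e γ) (e (-γ)) = one := by
      simp [e, mul, signMul, one]
    refine ⟨hb, fun k => mul (y (Fin.castSucc k)) (e (-γ)), fun k => nneg_mul (hy1 _) trivial,
        ?_, ?_⟩
    · rw [sumFin_mul, hsc, hγ, hce]
    · intro i
      have hi := hy3 (Fin.castSucc i)
      rw [show mv _ y (Fin.castSucc i) = sumFin fun j =>
            mul ((Fin.snoc (A i) (neg (b i)) : Fin (n+1) → STrop) j) (y j) by
          unfold mv; simp only [Fin.lastCases_castSucc]] at hi
      rw [sumFin_snoc] at hi
      simp only [Fin.snoc_castSucc, Fin.snoc_last] at hi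
      set m := sumFin fun k => mul (A i k) (y (Fin.castSucc k)) with hm
      rw [neg_mul'] at hi
      have hsymm : balZero (add (mul (b i) (y (Fin.last n))) (neg m)) := bal_symm hi
      have hmv : mv A (fun k => mul (y (Fin.castSucc k)) (e (-γ))) i = mul m (e (-γ)) := by
        unfold mv
        rw [← sumFin_mul]
        congr 1
        funext k
        rw [mul_assoc']
      show balZero (add (b i) (neg (mv A _ i)))
      rw [hmv, ← neg_mul',
        show b i = mul (mul (b i) (y (Fin.last n))) (e (-γ)) by
          rw [mul_assoc', hγ, hce, mul_one'],
        ← add_mul', balZero_mul_pos]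
      exact hsymm
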